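/- arXiv:1301.6236 — 4 statements merged into one kernel-verified Lean document; each statement's English description precedes it below -/
import Mathlib

section
/- Let V be a nonsingular m×m matrix over F_q[X] in weak Popov form. Then V has minimal row-degree sum among all matrices unimodular-equivalent to V, i.e., for any invertible matrix U over F_q[X], deg(UV) ≥ deg V. -/
open Polynomial

open scoped Classical

/-- The degree of a vector over `F[X]`: the maximum of the degrees of its entries
(`⊥` for the zero vector). -/
noncomputable def vecDeg {F : Type*} [Field F] {m : ℕ} (v : Fin m → Polynomial F) : WithBot ℕ :=
  Finset.univ.sup fun j => (v j).degree

/-- The leading position of a vector over `F[X]`: the largest index attaining the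
vector's degree. -/
noncomputable def leadPos {F : Type*} [Field F] {m : ℕ} (v : Fin m → Polynomial F) : ℕ :=
  (Finset.univ.filter fun j : Fin m => (v j).degree = vecDeg v).sup fun j => (j : ℕ)

/-- A square matrix over `F[X]` is in weak Popov form if the leading positions of
its rows are pairwise distinct. -/
noncomputable def WeakPopov {F : Type*} [Field F] {m : ℕ}
    (V : Matrix (Fin m) (Fin m) (Polynomial F)) : Prop :=
  Function.Injective fun i => leadPos (V i)

/-- The degree of a matrix over `F[X]`: the sum of its row degrees (in `WithBot ℕ`). -/
noncomputable def matDeg {F : Type*} [Field F] {m : ℕ}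
    (V : Matrix (Fin m) (Fin m) (Polynomial F)) : WithBot ℕ :=
  ∑ i, vecDeg (V i)

/-- The degree of a vector over `F[X]`, as a natural number (via `natDegree`). -/
def vecDegNat {F : Type*} [Field F] {m : ℕ} (v : Fin m → Polynomial F) : ℕ :=
  Finset.univ.sup fun j => (v j).natDegree

/-- The degree of a matrix over `F[X]` as a natural number: the sum of its row degrees. -/
def matDegNat {F : Type*} [Field F] {m : ℕ}
    (V : Matrix (Fin m) (Fin m) (Polynomial F)) : ℕ :=
  ∑ i, vecDegNat (V i)

/-- The diagonal weight matrix W_ℓ = diag(1, X^{k−1}, …, X^{ℓ(k−1)}). -/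
noncomputable def Wmat (F : Type*) [Field F] (k ℓ : ℕ) :
    Matrix (Fin (ℓ + 1)) (Fin (ℓ + 1)) (Polynomial F) :=
  Matrix.diagonal fun i => X ^ ((i : ℕ) * (k - 1))

/-!
A row `u ᵥ* V` of `U * V` cannot have smaller degree than any row `V j` with `u j ≠ 0`: among
the rows `i` maximising `deg (u i) + deg (V i)`, the one with the rightmost leading position `p`
is the only one contributing to the top coefficient at position `p`, because in weak Popov
form the other maximising rows have their leading positions strictly left of `p`. A nonzero
determinant of `U` provides a permutation `σ` with `U (σ i) i ≠ 0`, so row `σ i` of `U * V`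
dominates row `i` of `V`; summing over the rows gives the claim.
-/

open Matrix Finset

lemma monotone_unbotD_zero : Monotone (WithBot.unbotD (0 : ℕ)) := fun x y hxy => by
  rcases eq_or_ne x ⊥ with rfl | hx
  · exact Nat.zero_le _
  · exact WithBot.unbotD_mono hx hxy

lemma Polynomial.degree_sum_eq_of_degree_lt {R ι : Type*} [Semiring R] {s : Finset ι}
    {f : ι → R[X]} {i : ι} (hi : i ∈ s) (h : ∀ k ∈ s, k ≠ i → (f k).degree < (f i).degree) :
    (∑ k ∈ s, f k).degree = (f i).degree := by
  rcases eq_or_ne (f i) 0 with h0 | h0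
  · rw [sum_eq_single_of_mem i hi fun k hk hki => absurd (h k hk hki) (by simp [h0])]
  classical
  rw [← add_sum_erase s f hi, degree_add_eq_left_of_degree_lt]
  have hbot : ⊥ < (f i).degree := bot_lt_iff_ne_bot.2 (degree_ne_bot.2 h0)
  refine (degree_sum_le _ _).trans_lt ((Finset.sup_lt_iff hbot).2 fun k hk => ?_)
  exact h k (mem_of_mem_erase hk) (ne_of_mem_erase hk)

lemma Matrix.exists_perm_forall_ne_zero_of_det_ne_zero {n R : Type*} [DecidableEq n] [Fintype n]
    [CommRing R] {M : Matrix n n R} (h : M.det ≠ 0) : ∃ σ : Equiv.Perm n, ∀ i, M (σ i) i ≠ 0 := by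
  by_contra! hσ
  rw [det_apply'] at h
  refine h (sum_eq_zero fun σ _ => ?_)
  obtain ⟨i, hi⟩ := hσ σ
  exact mul_eq_zero_of_right _ (prod_eq_zero (mem_univ i) hi)

section RowDegree

variable {F : Type*} [Field F] {m : ℕ}

lemma degree_le_vecDeg (v : Fin m → F[X]) (p : Fin m) : (v p).degree ≤ vecDeg v :=
  le_sup (f := fun j => (v j).degree) (mem_univ p)

lemma le_leadPos {v : Fin m → F[X]} {p : Fin m} (h : (v p).degree = vecDeg v) :
    (p : ℕ) ≤ leadPos v :=
  le_sup (f := fun j : Fin m => (j : ℕ)) (by simp [h])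

lemma degree_lt_vecDeg_of_leadPos_lt {v : Fin m → F[X]} {p : Fin m} (h : leadPos v < p) :
    (v p).degree < vecDeg v :=
  (degree_le_vecDeg v p).lt_of_ne fun hp => (le_leadPos hp).not_gt h

lemma exists_degree_eq_vecDeg_at_leadPos {v : Fin m → F[X]} (h : vecDeg v ≠ ⊥) :
    ∃ p : Fin m, (p : ℕ) = leadPos v ∧ (v p).degree = vecDeg v := by
  rcases (univ : Finset (Fin m)).eq_empty_or_nonempty with he | hm
  · simp [vecDeg, he] at h
  obtain ⟨j, -, hj⟩ := exists_mem_eq_sup univ hm fun j => (v j).degree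
  obtain ⟨p, hp, hpj⟩ := exists_mem_eq_sup (univ.filter fun j : Fin m => (v j).degree = vecDeg v)
    ⟨j, by simp [vecDeg, hj]⟩ fun j : Fin m => (j : ℕ)
  exact ⟨p, hpj.symm, (mem_filter.1 hp).2⟩

lemma vecDegNat_eq_unbotD (v : Fin m → F[X]) : vecDegNat v = (vecDeg v).unbotD 0 := by
  rw [vecDeg, apply_sup_eq_sup_comp_of_linearOrder _ monotone_unbotD_zero rfl]
  rfl

lemma vecDegNat_le_vecDegNat {v w : Fin m → F[X]} (h : vecDeg v ≤ vecDeg w) :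
    vecDegNat v ≤ vecDegNat w := by
  simpa only [vecDegNat_eq_unbotD] using monotone_unbotD_zero h

end RowDegree

section WeakPopov

variable {F : Type*} [Field F] {m : ℕ} {V : Matrix (Fin m) (Fin m) F[X]}

/-- The predictable-degree inequality for weak Popov matrices. -/
theorem WeakPopov.degree_add_vecDeg_le_vecDeg_vecMul (hV : WeakPopov V) (u : Fin m → F[X])
    (j : Fin m) : (u j).degree + vecDeg (V j) ≤ vecDeg (u ᵥ* V) := by
  set D : Fin m → WithBot ℕ := fun i => (u i).degree + vecDeg (V i) with hD
  obtain ⟨i₀, -, hi₀⟩ := exists_mem_eq_sup univ ⟨j, mem_univ j⟩ D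
  obtain ⟨i₁, hi₁, hmax⟩ := (univ.filter fun i => D i = D i₀).exists_max_image
    (fun i => leadPos (V i)) ⟨i₀, by simp⟩
  replace hi₁ : D i₁ = D i₀ := (mem_filter.1 hi₁).2
  have hle : ∀ i, D i ≤ D i₁ := fun i => hi₁ ▸ hi₀ ▸ le_sup (mem_univ i)
  refine (hle j).trans ?_
  rcases eq_or_ne (D i₁) ⊥ with hbot | hbot
  · simp [hbot]
  obtain ⟨p, hp, hpdeg⟩ := exists_degree_eq_vecDeg_at_leadPos (v := V i₁)
    fun h => hbot (by simp [hD, h])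
  have hrest : ∀ i ∈ univ, i ≠ i₁ → (u i * V i p).degree < (u i₁ * V i₁ p).degree := by
    intro i _ hi
    rw [degree_mul, degree_mul, hpdeg]
    change _ < D i₁
    rcases (hle i).lt_or_eq with hlt | heq
    · exact (add_le_add_right (degree_le_vecDeg _ p) _).trans_lt hlt
    have hui : (u i).degree ≠ ⊥ := fun h => hbot (by rw [← heq]; simp [hD, h])
    have hlt : leadPos (V i) < p :=
      hp ▸ (hmax i (by simp [heq, hi₁])).lt_of_ne fun h => hi (hV h)
    rw [← heq]
    exact WithBot.add_lt_add_left hui (degree_lt_vecDeg_of_leadPos_lt hlt)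
  calc D i₁ = ((u ᵥ* V) p).degree := by
        rw [vecMul, dotProduct, degree_sum_eq_of_degree_lt (mem_univ i₁) hrest, degree_mul, hpdeg]
    _ ≤ vecDeg (u ᵥ* V) := degree_le_vecDeg _ p

theorem WeakPopov.vecDeg_le_vecDeg_vecMul (hV : WeakPopov V) {u : Fin m → F[X]} {j : Fin m}
    (hu : u j ≠ 0) : vecDeg (V j) ≤ vecDeg (u ᵥ* V) :=
  calc vecDeg (V j) ≤ (u j).degree + vecDeg (V j) :=
        le_add_of_nonneg_left (zero_le_degree_iff.2 hu)
    _ ≤ vecDeg (u ᵥ* V) := hV.degree_add_vecDeg_le_vecDeg_vecMul u j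

end WeakPopov

theorem statement6_general {F : Type*} [Field F] {m : ℕ}
    (V : Matrix (Fin m) (Fin m) (Polynomial F))
    (hV : WeakPopov V)
    (U : Matrix (Fin m) (Fin m) (Polynomial F)) (hU : IsUnit U) :
    matDegNat V ≤ matDegNat (U * V) := by
  obtain ⟨σ, hσ⟩ :=
    exists_perm_forall_ne_zero_of_det_ne_zero ((isUnit_iff_isUnit_det U).1 hU).ne_zero
  calc matDegNat V = ∑ i, vecDegNat (V i) := rfl
    _ ≤ ∑ i, vecDegNat ((U * V) (σ i)) := sum_le_sum fun i _ => by
        rw [mul_apply_eq_vecMul]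
        exact vecDegNat_le_vecDegNat (hV.vecDeg_le_vecDeg_vecMul (hσ i))
    _ = matDegNat (U * V) := Equiv.sum_comp σ fun i => vecDegNat ((U * V) i)

/-- A nonsingular square matrix V over F[X] in weak Popov form has minimal
row-degree sum among all matrices unimodular-equivalent to it: for any invertible
(unimodular) matrix U over F[X], deg(UV) ≥ deg V. -/
theorem statement6 {F : Type*} [Field F] [Fintype F] {m : ℕ}
    (V : Matrix (Fin m) (Fin m) (Polynomial F))
    (hdet : V.det ≠ 0) (hV : WeakPopov V)
    (U : Matrix (Fin m) (Fin m) (Polynomial F)) (hU : IsUnit U) :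
    matDegNat V ≤ matDegNat (U * V) :=
  statement6_general V hV U hU
end

section
/- If B^(0)(X,Y), …, B^(ℓ)(X,Y) is a basis of M_{s,ℓ} as an F_q[X]-module, then B^(0), …, B^(ℓ), Y^{ℓ−s+1}(Y−R(X))^s is a basis of M_{s,ℓ+1}. -/
/-!
The coefficient of `Y^(ℓ+1)` is an `F[X]`-linear form `φ` on `M_{s,ℓ+1}` whose kernel is
`M_{s,ℓ}`. Since `Y - R(X)` vanishes at every point `(α i, r' i)`, the polynomial
`G = Y^(ℓ-s+1) (Y - R)^s` lies in `M_{s,ℓ+1}`, and it is monic of `Y`-degree `ℓ + 1`, so `φ G = 1`.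
Hence `M_{s,ℓ+1} = M_{s,ℓ} ⊕ F[X] G`, and adjoining `G` to a basis of `M_{s,ℓ}` gives a basis of
`M_{s,ℓ+1}`.
-/

open Polynomial

/-- The shifted polynomial Q(X+a, Y+b), where `Q : F[X][Y]` (outer variable `Y`,
inner variable `X`). -/
noncomputable def shiftXY {F : Type*} [Field F] (Q : Polynomial (Polynomial F)) (a b : F) :
    Polynomial (Polynomial F) :=
  (Q.map ((aeval (X + C a : Polynomial F)).toRingHom : Polynomial F →+* Polynomial F)).comp
    (X + C (C b))

/-- `Q` vanishes with multiplicity at least `s` at the point `(a, b)`: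
`Q(X+a, Y+b)` has no monomial `X^i Y^j` with `i + j < s`. -/
def HasMultAt {F : Type*} [Field F] (Q : Polynomial (Polynomial F)) (a b : F) (s : ℕ) : Prop :=
  ∀ i j : ℕ, i + j < s → ((shiftXY Q a b).coeff j).coeff i = 0

/-- The set (an `F[X]`-module) of bivariate polynomials of `Y`-degree at most `ℓ`
vanishing with multiplicity at least `s` at each point `(α i, r' i)`. -/
def InterpSet {F : Type*} [Field F] {n : ℕ} (α r' : Fin n → F) (s ℓ : ℕ) :
    Set (Polynomial (Polynomial F)) :=
  {Q | Q.natDegree ≤ ℓ ∧ ∀ i, HasMultAt Q (α i) (r' i) s}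

/-- The family `b` is a basis of the `F[X]`-module `M_{s,ℓ} = InterpSet α r' s ℓ`:
it is linearly independent over `F[X]` and its `F[X]`-span is exactly `M_{s,ℓ}`. -/
def IsBasisOfInterp {F : Type*} [Field F] {n : ℕ} (α r' : Fin n → F) (s ℓ : ℕ)
    {ι : Type*} (b : ι → Polynomial (Polynomial F)) : Prop :=
  LinearIndependent (Polynomial F) b ∧
    (Submodule.span (Polynomial F) (Set.range b) : Set (Polynomial (Polynomial F))) =
      InterpSet α r' s ℓ

section LinearAlgebra

variable {A M : Type*} [Ring A] [AddCommGroup M] [Module A M]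

theorem LinearIndependent.finSnoc_of_map_eq_one {m : ℕ} {v : Fin m → M} {x : M}
    (hv : LinearIndependent A v) (φ : M →ₗ[A] A)
    (hker : Submodule.span A (Set.range v) ≤ LinearMap.ker φ) (hφx : φ x = 1) :
    LinearIndependent A (Fin.snoc v x : Fin (m + 1) → M) :=
  LinearIndependent.finSnoc' v x hv fun c y hy hsum => by
    simpa [hφx, LinearMap.mem_ker.mp (hker hy)] using congrArg φ hsum

theorem Submodule.span_insert_eq_of_map_eq_one {S : Set M} {N : Submodule A M} {x : M}
    (φ : M →ₗ[A] A) (hS : span A S = N ⊓ LinearMap.ker φ) (hxN : x ∈ N) (hφx : φ x = 1) :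
    span A (insert x S) = N := by
  rw [span_insert]
  refine le_antisymm (sup_le (span_singleton_le_iff_mem x N |>.mpr hxN) (hS ▸ inf_le_left)) ?_
  intro y hy
  have hres : y - φ y • x ∈ span A S := by
    rw [hS]
    exact ⟨N.sub_mem hy (N.smul_mem _ hxN), by simp [hφx]⟩
  exact mem_sup.mpr ⟨φ y • x, mem_span_singleton.mpr ⟨φ y, rfl⟩, _, hres, add_sub_cancel _ _⟩

end LinearAlgebra

theorem Polynomial.coeff_coeff_mul_eq_zero_of_add_lt {R : Type*} [Semiring R] {P Q : R[X][X]}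
    {u v : ℕ}
    (hP : ∀ i j, i + j < u → (P.coeff j).coeff i = 0)
    (hQ : ∀ i j, i + j < v → (Q.coeff j).coeff i = 0) {i j : ℕ} (hij : i + j < u + v) :
    ((P * Q).coeff j).coeff i = 0 := by
  rw [coeff_mul, finsetSum_coeff]
  refine Finset.sum_eq_zero fun y hy => ?_
  rw [coeff_mul]
  refine Finset.sum_eq_zero fun x hx => ?_
  rw [Finset.HasAntidiagonal.mem_antidiagonal] at hx hy
  by_cases hlow : x.1 + y.1 < u
  · rw [hP _ _ hlow, zero_mul]
  · rw [hQ x.2 y.2 (by omega), mul_zero]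

section Multiplicity

variable {F : Type*} [Field F]

noncomputable def shiftRingHom (a b : F) : F[X][X] →+* F[X][X] :=
  (compRingHom (X + C (C b))).comp (mapRingHom (aeval (X + C a)).toRingHom)

theorem shiftXY_eq_shiftRingHom (Q : F[X][X]) (a b : F) : shiftXY Q a b = shiftRingHom a b Q :=
  rfl

theorem hasMultAt_zero (Q : F[X][X]) (a b : F) : HasMultAt Q a b 0 :=
  fun _ _ h => absurd h (Nat.not_lt_zero _)

theorem HasMultAt.mul {P Q : F[X][X]} {a b : F} {u v : ℕ}
    (hP : HasMultAt P a b u) (hQ : HasMultAt Q a b v) : HasMultAt (P * Q) a b (u + v) := by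
  intro i j hij
  rw [shiftXY_eq_shiftRingHom, map_mul]
  exact coeff_coeff_mul_eq_zero_of_add_lt hP hQ hij

theorem HasMultAt.pow {P : F[X][X]} {a b : F} {u : ℕ} (hP : HasMultAt P a b u) (k : ℕ) :
    HasMultAt (P ^ k) a b (k * u) := by
  induction k with
  | zero => simpa using hasMultAt_zero 1 a b
  | succ k ih => simpa [pow_succ, add_mul] using ih.mul hP

theorem HasMultAt.add {P Q : F[X][X]} {a b : F} {s : ℕ}
    (hP : HasMultAt P a b s) (hQ : HasMultAt Q a b s) : HasMultAt (P + Q) a b s := by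
  simp only [HasMultAt, shiftXY_eq_shiftRingHom, map_add, coeff_add] at *
  intro i j hij
  rw [hP i j hij, hQ i j hij, add_zero]

theorem hasMultAt_X_sub_C {R : F[X]} {a b : F} (hR : R.eval a = b) :
    HasMultAt (X - C R) a b 1 := by
  intro i j hij
  obtain ⟨rfl, rfl⟩ : i = 0 ∧ j = 0 := by omega
  have hshift : shiftXY (X - C R) a b = X + C (C b) - C (R.comp (X + C a)) := by
    simp [shiftXY_eq_shiftRingHom, shiftRingHom, aeval_def, eval₂_eq_eval_map, comp]
  simp [hshift, coeff_zero_eq_eval_zero, eval_comp, hR]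

def multiplicityIdeal (a b : F) (s : ℕ) : Ideal F[X][X] where
  carrier := {Q | HasMultAt Q a b s}
  zero_mem' i j _ := by simp [shiftXY_eq_shiftRingHom]
  add_mem' := HasMultAt.add
  smul_mem' c Q hQ := by
    simpa using (hasMultAt_zero c a b).mul hQ

theorem mem_multiplicityIdeal {a b : F} {s : ℕ} {Q : F[X][X]} :
    Q ∈ multiplicityIdeal a b s ↔ HasMultAt Q a b s :=
  Iff.rfl

end Multiplicity

section InterpModule

variable {F : Type*} [Field F] {n : ℕ} (α r' : Fin n → F) (s : ℕ)

noncomputable def interpSubmodule (ℓ : ℕ) : Submodule F[X] F[X][X] :=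
  degreeLE F[X] ℓ ⊓ ⨅ i, (multiplicityIdeal (α i) (r' i) s).restrictScalars F[X]

theorem coe_interpSubmodule (ℓ : ℕ) :
    (interpSubmodule α r' s ℓ : Set F[X][X]) = InterpSet α r' s ℓ := by
  ext Q
  simp [interpSubmodule, InterpSet, mem_degreeLE, natDegree_le_iff_degree_le,
    mem_multiplicityIdeal]

theorem interpSubmodule_eq_inf_ker (ℓ : ℕ) :
    interpSubmodule α r' s ℓ =
      interpSubmodule α r' s (ℓ + 1) ⊓ LinearMap.ker (lcoeff F[X] (ℓ + 1)) := by
  ext Q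
  simp only [← SetLike.mem_coe, Submodule.coe_inf, coe_interpSubmodule]
  simp only [InterpSet, Set.mem_inter_iff, Set.mem_ofPred_eq, SetLike.mem_coe, LinearMap.mem_ker,
    lcoeff_apply, natDegree_le_iff_coeff_eq_zero]
  constructor
  · rintro ⟨hdeg, hmult⟩
    exact ⟨⟨fun N hN => hdeg N (by omega), hmult⟩, hdeg _ (by omega)⟩
  · rintro ⟨⟨hdeg, hmult⟩, htop⟩
    refine ⟨fun N hN => ?_, hmult⟩
    rcases (Nat.succ_le_of_lt hN).eq_or_lt with rfl | hlt
    exacts [htop, hdeg N hlt]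

variable {α r'}

theorem X_pow_mul_X_sub_C_pow_mem_interpSubmodule {R : F[X]} (hR : ∀ i, R.eval (α i) = r' i)
    (k : ℕ) : X ^ k * (X - C R) ^ s ∈ interpSubmodule α r' s (k + s) := by
  rw [← SetLike.mem_coe, coe_interpSubmodule]
  refine ⟨natDegree_mul_le_of_le (natDegree_X_pow_le k) ?_, fun i => ?_⟩
  · exact (natDegree_pow_le_of_le s (natDegree_X_sub_C_le R)).trans_eq (mul_one s)
  · simpa using (hasMultAt_zero (X ^ k) _ _).mul ((hasMultAt_X_sub_C (hR i)).pow s)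

end InterpModule

theorem Polynomial.coeff_X_pow_mul_X_sub_C_pow {S : Type*} [CommRing S] [Nontrivial S] (R : S)
    (k s : ℕ) : (X ^ k * (X - C R) ^ s).coeff (k + s) = 1 := by
  rw [coeff_X_pow_mul', if_pos (Nat.le_add_right k s), Nat.add_sub_cancel_left]
  have hmonic := (monic_X_sub_C R).pow s
  rw [← hmonic.coeff_natDegree, (monic_X_sub_C R).natDegree_pow, natDegree_X_sub_C, mul_one]

theorem statement9_general {F : Type*} [Field F] {n : ℕ}
    (α : Fin n → F) (r' : Fin n → F)
    (s ℓ : ℕ) (hsℓ : s ≤ ℓ)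
    (R : Polynomial F) (hR : ∀ i, R.eval (α i) = r' i)
    (B : Fin (ℓ + 1) → Polynomial (Polynomial F))
    (hB : IsBasisOfInterp α r' s ℓ B) :
    IsBasisOfInterp α r' s (ℓ + 1)
      (Fin.snoc B (X ^ (ℓ - s + 1) * (X - C R) ^ s)) := by
  obtain ⟨hBli, hBspan⟩ := hB
  have hdeg : ℓ - s + 1 + s = ℓ + 1 := by omega
  have hGmem := X_pow_mul_X_sub_C_pow_mem_interpSubmodule s hR (ℓ - s + 1)
  have hGtop := coeff_X_pow_mul_X_sub_C_pow R (ℓ - s + 1) s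
  rw [hdeg] at hGmem hGtop
  have hspan : Submodule.span F[X] (Set.range B) =
      interpSubmodule α r' s (ℓ + 1) ⊓ LinearMap.ker (lcoeff F[X] (ℓ + 1)) := by
    rw [← interpSubmodule_eq_inf_ker]
    exact SetLike.coe_injective (hBspan.trans (coe_interpSubmodule α r' s ℓ).symm)
  refine ⟨hBli.finSnoc_of_map_eq_one _ (hspan ▸ inf_le_right) hGtop, ?_⟩
  rw [Fin.range_snoc, Submodule.span_insert_eq_of_map_eq_one _ hspan hGmem hGtop,
    coe_interpSubmodule]

/-- If B^(0), …, B^(ℓ) is a basis of M_{s,ℓ}, then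
B^(0), …, B^(ℓ), Y^{ℓ−s+1}(Y−R)^s is a basis of M_{s,ℓ+1}. -/
theorem statement9 {F : Type*} [Field F] [Fintype F] {n : ℕ}
    (α : Fin n → F) (hα : Function.Injective α) (r' : Fin n → F)
    (s ℓ : ℕ) (hs : 1 ≤ s) (hsℓ : s ≤ ℓ)
    (R : Polynomial F) (hRdeg : R.natDegree < n) (hR : ∀ i, R.eval (α i) = r' i)
    (B : Fin (ℓ + 1) → Polynomial (Polynomial F))
    (hB : IsBasisOfInterp α r' s ℓ B) :
    IsBasisOfInterp α r' s (ℓ + 1)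
      (Fin.snoc B (X ^ (ℓ - s + 1) * (X - C R) ^ s)) :=
  statement9_general α r' s ℓ hsℓ R hR B hB
end

section
/- Let B be an (ℓ+1)×(ℓ+1) matrix over F_q[X] such that B·W_ℓ is in weak Popov form, and suppose deg R ≥ k (the received word is not a codeword). Form the (ℓ+2)×(ℓ+2) matrix C by appending a zero column to the right of B and then appending the row (0,…,0, binom(s,0)(−R)^s, binom(s,1)(−R)^{s−1}, …, binom(s,s)) with the (−R)^s entry in column ℓ+1−s. Then the orthogonality defect of C·W_{ℓ+1} equals s(deg R − k + 1), which is at most s(n−k). -/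
/-!
A matrix `V` in weak Popov form is row reduced: the coefficients of its rows at their row degrees
form a matrix which, with its rows ordered by leading position, is lower triangular with nonzero
diagonal. Its determinant is the coefficient of `det V` at the sum of the row degrees, so
`deg det V = deg V`.

Apply this to `B·W_ℓ`. Since `det C = det B`, `deg det (C·W_{ℓ+1})` exceeds `deg det (B·W_ℓ)` by
`(ℓ+1)(k−1)`, while `deg (C·W_{ℓ+1})` exceeds `deg (B·W_ℓ)` by the degree of the new row,
`s·deg R + (ℓ+1−s)(k−1)`, attained at the `(−R)^s` entry because `deg R ≥ k − 1`.
-/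

open Polynomial

open scoped Classical

/-- The matrix C^I of micro-step type I: B extended with a zero column on the right and
the extra row (0,…,0, (−R)^s, C(s,1)(−R)^{s−1}, …, 1), whose (−R)^s entry sits in
column ℓ+1−s. -/
noncomputable def stepIMat {F : Type*} [Field F] (ℓ s : ℕ)
    (B : Matrix (Fin (ℓ + 1)) (Fin (ℓ + 1)) (Polynomial F)) (R : Polynomial F) :
    Matrix (Fin (ℓ + 2)) (Fin (ℓ + 2)) (Polynomial F) :=
  Matrix.of fun i j =>
    if hi : (i : ℕ) < ℓ + 1 then
      if hj : (j : ℕ) < ℓ + 1 then B ⟨(i : ℕ), hi⟩ ⟨(j : ℕ), hj⟩ else 0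
    else
      if ℓ + 1 - s ≤ (j : ℕ) then
        (s.choose ((j : ℕ) - (ℓ + 1 - s)) : Polynomial F) *
          (-R) ^ (s - ((j : ℕ) - (ℓ + 1 - s)))
      else 0

theorem Polynomial.coeff_prod_sum_of_natDegree_le {R ι : Type*} [CommSemiring R] (s : Finset ι)
    (f : ι → R[X]) (n : ι → ℕ) (h : ∀ i ∈ s, (f i).natDegree ≤ n i) :
    (∏ i ∈ s, f i).coeff (∑ i ∈ s, n i) = ∏ i ∈ s, (f i).coeff (n i) := by
  induction s using Finset.cons_induction with
  | empty => simp
  | cons a s ha ih =>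
    have hs : ∀ i ∈ s, (f i).natDegree ≤ n i := fun i hi => h i (Finset.mem_cons_of_mem hi)
    rw [Finset.prod_cons, Finset.sum_cons, Finset.prod_cons,
      coeff_mul_add_eq_of_natDegree_le (h a (Finset.mem_cons_self a s))
        ((natDegree_prod_le s f).trans (Finset.sum_le_sum hs)), ih hs]

theorem Matrix.det_ne_zero_of_injective_pivot {K n : Type*} [CommRing K] [IsDomain K]
    [Fintype n] [DecidableEq n] [LinearOrder n] (A : Matrix n n K) (p : n → n)
    (hp : Function.Injective p) (hpivot : ∀ i, A i (p i) ≠ 0)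
    (hright : ∀ i j, p i < j → A i j = 0) : A.det ≠ 0 := by
  let σ : Equiv.Perm n := Equiv.ofBijective p (Finite.injective_iff_bijective.mp hp)
  have hσ : ∀ i, p (σ.symm i) = i := σ.apply_symm_apply
  have htri : (A.submatrix σ.symm id).IsLowerTriangular := fun i j hij =>
    hright _ _ (by rwa [hσ])
  have hdet : (A.submatrix σ.symm id).det ≠ 0 := by
    rw [Matrix.det_of_isLowerTriangular _ htri]
    refine Finset.prod_ne_zero_iff.mpr fun i _ => ?_
    simpa only [Matrix.submatrix_apply, id, hσ] using hpivot (σ.symm i)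
  rw [Matrix.det_permute] at hdet
  exact right_ne_zero_of_mul hdet

section RowDegree

variable {F : Type*} [Field F] {m : ℕ}

theorem natDegree_le_vecDegNat (v : Fin m → F[X]) (j : Fin m) :
    (v j).natDegree ≤ vecDegNat v :=
  Finset.le_sup (f := fun j => (v j).natDegree) (Finset.mem_univ j)

theorem vecDegNat_castSucc (v : Fin (m + 1) → F[X]) :
    vecDegNat v = max (vecDegNat fun j => v j.castSucc) (v (Fin.last m)).natDegree := by
  rw [vecDegNat, vecDegNat, Fin.univ_castSuccEmb, Finset.sup_cons, Finset.sup_map, max_comm]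
  rfl

theorem exists_ne_zero_natDegree_eq_vecDegNat {v : Fin m → F[X]} (hv : v ≠ 0) :
    ∃ j, v j ≠ 0 ∧ (v j).natDegree = vecDegNat v := by
  obtain ⟨j₀, hj₀⟩ := Function.ne_iff.mp hv
  obtain ⟨j, -, hj⟩ := Finset.exists_mem_eq_sup Finset.univ ⟨j₀, Finset.mem_univ j₀⟩
    fun j => (v j).natDegree
  by_cases hvj : v j = 0
  · refine ⟨j₀, hj₀, le_antisymm (natDegree_le_vecDegNat v j₀) ?_⟩
    simp [vecDegNat, hj, hvj]
  · exact ⟨j, hvj, hj.symm⟩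

theorem vecDeg_eq_vecDegNat {v : Fin m → F[X]} (hv : v ≠ 0) :
    vecDeg v = vecDegNat v := by
  refine le_antisymm (Finset.sup_le fun j _ => degree_le_natDegree.trans ?_) ?_
  · exact WithBot.coe_le_coe.mpr (natDegree_le_vecDegNat v j)
  · obtain ⟨j, hvj, hj⟩ := exists_ne_zero_natDegree_eq_vecDegNat hv
    rw [← hj, ← degree_eq_natDegree hvj]
    exact Finset.le_sup (f := fun j => (v j).degree) (Finset.mem_univ j)

theorem exists_leadPos_spec {v : Fin m → F[X]} (hv : v ≠ 0) :
    ∃ p : Fin m, (p : ℕ) = leadPos v ∧ (v p).coeff (vecDegNat v) ≠ 0 ∧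
      ∀ j, p < j → (v j).coeff (vecDegNat v) = 0 := by
  set P := Finset.univ.filter fun j : Fin m => (v j).degree = vecDeg v
  have hP : P.Nonempty := by
    obtain ⟨j, -, hj⟩ := Finset.exists_mem_eq_sup Finset.univ
      ⟨_, Finset.mem_univ (Function.ne_iff.mp hv).choose⟩ fun j => (v j).degree
    exact ⟨j, Finset.mem_filter.mpr ⟨Finset.mem_univ j, hj.symm⟩⟩
  obtain ⟨p, hpP, hp⟩ := Finset.exists_mem_eq_sup P hP fun j => (j : ℕ)
  have hdeg : (v p).degree = vecDegNat v :=
    (Finset.mem_filter.mp hpP).2.trans (vecDeg_eq_vecDegNat hv)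
  refine ⟨p, hp.symm, ?_, fun j hj => coeff_eq_zero_of_degree_lt ?_⟩
  · rw [← natDegree_eq_of_degree_eq_some hdeg]
    exact leadingCoeff_ne_zero.mpr fun h => by simp [h] at hdeg
  · rw [← vecDeg_eq_vecDegNat hv]
    refine (Finset.le_sup (f := fun j => (v j).degree) (Finset.mem_univ j)).lt_of_ne fun hj' => ?_
    have hjP : j ∈ P := Finset.mem_filter.mpr ⟨Finset.mem_univ j, hj'⟩
    have := Finset.le_sup (f := fun j : Fin m => (j : ℕ)) hjP
    rw [hp] at this
    exact hj.not_ge this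

end RowDegree

section LeadingCoeffMatrix

variable {F : Type*} [Field F] {m : ℕ}

def leadingCoeffMatrix (V : Matrix (Fin m) (Fin m) F[X]) : Matrix (Fin m) (Fin m) F :=
  Matrix.of fun i j => (V i j).coeff (vecDegNat (V i))

theorem matDegNat_eq_sum_perm (V : Matrix (Fin m) (Fin m) F[X]) (σ : Equiv.Perm (Fin m)) :
    matDegNat V = ∑ i, vecDegNat (V (σ i)) :=
  (Equiv.sum_comp σ fun i => vecDegNat (V i)).symm

theorem natDegree_det_le_matDegNat (V : Matrix (Fin m) (Fin m) F[X]) :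
    V.det.natDegree ≤ matDegNat V := by
  rw [Matrix.det_apply']
  refine natDegree_sum_le_of_forall_le _ _ fun σ _ => ?_
  rw [← C_eq_intCast, matDegNat_eq_sum_perm V σ]
  exact (natDegree_C_mul_le _ _).trans <| (natDegree_prod_le _ _).trans <|
    Finset.sum_le_sum fun i _ => natDegree_le_vecDegNat _ i

theorem coeff_det_matDegNat (V : Matrix (Fin m) (Fin m) F[X]) :
    V.det.coeff (matDegNat V) = (leadingCoeffMatrix V).det := by
  rw [Matrix.det_apply', Matrix.det_apply', finsetSum_coeff]
  refine Finset.sum_congr rfl fun σ _ => ?_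
  rw [← C_eq_intCast, coeff_C_mul, matDegNat_eq_sum_perm V σ,
    coeff_prod_sum_of_natDegree_le _ _ _ fun i _ => natDegree_le_vecDegNat _ i]
  simp [leadingCoeffMatrix]

theorem WeakPopov.natDegree_det_eq {V : Matrix (Fin m) (Fin m) F[X]} (hWP : WeakPopov V)
    (hV : V.det ≠ 0) : V.det.natDegree = matDegNat V := by
  have hrows : ∀ i, V i ≠ 0 := fun i h => hV (Matrix.det_eq_zero_of_row_eq_zero i (congrFun h))
  choose p hp hpivot hright using fun i => exists_leadPos_spec (hrows i)
  have hinj : Function.Injective p := fun i j hij => hWP (by simp only [← hp, hij])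
  have hcoeff : V.det.coeff (matDegNat V) ≠ 0 := by
    rw [coeff_det_matDegNat]
    exact Matrix.det_ne_zero_of_injective_pivot _ p hinj hpivot hright
  exact le_antisymm (natDegree_det_le_matDegNat V) (le_natDegree_of_ne_zero hcoeff)

end LeadingCoeffMatrix

section StepI

variable {F : Type*} [Field F] {k ℓ s : ℕ}

theorem mul_Wmat_apply {m : ℕ} (V : Matrix (Fin (m + 1)) (Fin (m + 1)) F[X]) (i j : Fin (m + 1)) :
    (V * Wmat F k m) i j = V i j * X ^ ((j : ℕ) * (k - 1)) := by
  rw [Wmat, Matrix.mul_diagonal]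

theorem natDegree_det_mul_Wmat {m : ℕ} {V : Matrix (Fin (m + 1)) (Fin (m + 1)) F[X]}
    (hV : V.det ≠ 0) :
    (V * Wmat F k m).det.natDegree = V.det.natDegree + ∑ i : Fin (m + 1), (i : ℕ) * (k - 1) := by
  rw [Matrix.det_mul, Wmat, Matrix.det_diagonal, Finset.prod_pow_eq_pow_sum,
    natDegree_mul hV (pow_ne_zero _ X_ne_zero), natDegree_X_pow]

theorem det_mul_Wmat_ne_zero {m : ℕ} {V : Matrix (Fin (m + 1)) (Fin (m + 1)) F[X]}
    (hV : V.det ≠ 0) : (V * Wmat F k m).det ≠ 0 := by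
  rw [Matrix.det_mul, Wmat, Matrix.det_diagonal]
  exact mul_ne_zero hV (Finset.prod_ne_zero_iff.mpr fun _ _ => pow_ne_zero _ X_ne_zero)

variable (B : Matrix (Fin (ℓ + 1)) (Fin (ℓ + 1)) F[X]) (R : F[X])

@[simp]
theorem stepIMat_castSucc_castSucc (i j : Fin (ℓ + 1)) :
    stepIMat ℓ s B R i.castSucc j.castSucc = B i j := by
  simp [stepIMat, Fin.is_le]

@[simp]
theorem stepIMat_castSucc_last (i : Fin (ℓ + 1)) :
    stepIMat ℓ s B R i.castSucc (Fin.last (ℓ + 1)) = 0 := by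
  simp [stepIMat, Fin.is_le]

theorem stepIMat_last (j : Fin (ℓ + 2)) :
    stepIMat ℓ s B R (Fin.last (ℓ + 1)) j =
      if ℓ + 1 - s ≤ (j : ℕ) then
        (s.choose ((j : ℕ) - (ℓ + 1 - s)) : F[X]) * (-R) ^ (s - ((j : ℕ) - (ℓ + 1 - s)))
      else 0 := by
  simp [stepIMat]

theorem stepIMat_last_last (hs : s ≤ ℓ + 1) :
    stepIMat ℓ s B R (Fin.last (ℓ + 1)) (Fin.last (ℓ + 1)) = 1 := by
  rw [stepIMat_last, if_pos (by simp), Fin.val_last, Nat.sub_sub_self hs, Nat.choose_self,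
    Nat.sub_self, pow_zero, Nat.cast_one, one_mul]

theorem stepIMat_last_sub (hs : s ≤ ℓ + 1) :
    stepIMat ℓ s B R (Fin.last (ℓ + 1)) ⟨ℓ + 1 - s, by omega⟩ = (-R) ^ s := by
  simp [stepIMat_last]

theorem det_stepIMat (hs : s ≤ ℓ + 1) : (stepIMat ℓ s B R).det = B.det := by
  rw [Matrix.det_succ_column _ (Fin.last (ℓ + 1)), Fin.sum_univ_castSucc]
  have hminor : (stepIMat ℓ s B R).submatrix Fin.castSucc Fin.castSucc = B := by
    ext i j
    simp
  simp [stepIMat_last_last B R hs, hminor]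

theorem vecDegNat_stepIMat_mul_Wmat_castSucc (i : Fin (ℓ + 1)) :
    vecDegNat ((stepIMat ℓ s B R * Wmat F k (ℓ + 1)) i.castSucc) =
      vecDegNat ((B * Wmat F k ℓ) i) := by
  rw [vecDegNat_castSucc, mul_Wmat_apply, stepIMat_castSucc_last, zero_mul, natDegree_zero,
    Nat.max_zero]
  congr 1
  ext j : 1
  rw [mul_Wmat_apply, mul_Wmat_apply, stepIMat_castSucc_castSucc, Fin.val_castSucc]

theorem natDegree_stepIMat_mul_Wmat_last_le (hkR : k - 1 ≤ R.natDegree) (j : Fin (ℓ + 2)) :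
    ((stepIMat ℓ s B R * Wmat F k (ℓ + 1)) (Fin.last (ℓ + 1)) j).natDegree ≤
      s * R.natDegree + (ℓ + 1 - s) * (k - 1) := by
  rw [mul_Wmat_apply, stepIMat_last]
  split_ifs with hj
  · -- with `j = ℓ + 1 - s + t`, the entry has degree at most `(s - t) deg R + j (k - 1)`
    compute_degree
    obtain ⟨t, ht⟩ := Nat.exists_eq_add_of_le hj
    obtain ⟨u, rfl⟩ : ∃ u, s = t + u := Nat.exists_eq_add_of_le (by omega)
    rw [ht, Nat.add_sub_cancel_left, Nat.add_sub_cancel_left]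
    nlinarith [Nat.mul_le_mul_left t hkR]
  · simp

theorem vecDegNat_stepIMat_mul_Wmat_last (hs : s ≤ ℓ + 1) (hR : R ≠ 0)
    (hkR : k - 1 ≤ R.natDegree) :
    vecDegNat ((stepIMat ℓ s B R * Wmat F k (ℓ + 1)) (Fin.last (ℓ + 1))) =
      s * R.natDegree + (ℓ + 1 - s) * (k - 1) := by
  refine le_antisymm (Finset.sup_le fun j _ => natDegree_stepIMat_mul_Wmat_last_le B R hkR j) ?_
  have hpivot := natDegree_le_vecDegNat ((stepIMat ℓ s B R * Wmat F k (ℓ + 1)) (Fin.last (ℓ + 1)))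
    ⟨ℓ + 1 - s, by omega⟩
  rwa [mul_Wmat_apply, stepIMat_last_sub B R hs, natDegree_mul (pow_ne_zero _ (neg_ne_zero.mpr hR))
    (pow_ne_zero _ X_ne_zero), natDegree_pow, natDegree_neg, natDegree_X_pow] at hpivot

theorem matDegNat_stepIMat_mul_Wmat (hs : s ≤ ℓ + 1) (hR : R ≠ 0) (hkR : k - 1 ≤ R.natDegree) :
    matDegNat (stepIMat ℓ s B R * Wmat F k (ℓ + 1)) =
      matDegNat (B * Wmat F k ℓ) + (s * R.natDegree + (ℓ + 1 - s) * (k - 1)) := by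
  rw [matDegNat, Fin.sum_univ_castSucc, vecDegNat_stepIMat_mul_Wmat_last B R hs hR hkR]
  simp only [vecDegNat_stepIMat_mul_Wmat_castSucc, matDegNat]

end StepI

theorem statement11_general {F : Type*} [Field F] {n k s ℓ : ℕ}
    (hk : 1 ≤ k) (hkn : k ≤ n) (hsℓ : s ≤ ℓ)
    (R : Polynomial F) (hRn : R.natDegree < n) (hRk : k ≤ R.natDegree)
    (B : Matrix (Fin (ℓ + 1)) (Fin (ℓ + 1)) (Polynomial F))
    (hB : B.det ≠ 0) (hWP : WeakPopov (B * Wmat F k ℓ)) :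
    matDegNat (stepIMat ℓ s B R * Wmat F k (ℓ + 1)) =
        (stepIMat ℓ s B R * Wmat F k (ℓ + 1)).det.natDegree +
          s * (R.natDegree - k + 1) ∧
      s * (R.natDegree - k + 1) ≤ s * (n - k) := by
  have hs : s ≤ ℓ + 1 := by omega
  have hR : R ≠ 0 := by
    rintro rfl
    simp only [natDegree_zero] at hRk
    omega
  have hdetC : (stepIMat ℓ s B R).det ≠ 0 := by rwa [det_stepIMat B R hs]
  refine ⟨?_, Nat.mul_le_mul_left s (by omega)⟩
  rw [matDegNat_stepIMat_mul_Wmat B R hs hR (by omega),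
    ← hWP.natDegree_det_eq (det_mul_Wmat_ne_zero hB), natDegree_det_mul_Wmat hB,
    natDegree_det_mul_Wmat hdetC, det_stepIMat B R hs,
    Fin.sum_univ_castSucc (n := ℓ + 1), Fin.val_last]
  simp only [Fin.val_castSucc]
  zify [hs, hk, hRk]
  ring

/-- If B·W_ℓ is in weak Popov form and deg R ≥ k, then the orthogonality
defect of C^I·W_{ℓ+1} equals s(deg R − k + 1), which is at most s(n−k). -/
theorem statement11 {F : Type*} [Field F] [Fintype F] {n k s ℓ : ℕ}
    (hk : 1 ≤ k) (hkn : k ≤ n) (hs : 1 ≤ s) (hsℓ : s ≤ ℓ)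
    (R : Polynomial F) (hRn : R.natDegree < n) (hRk : k ≤ R.natDegree)
    (B : Matrix (Fin (ℓ + 1)) (Fin (ℓ + 1)) (Polynomial F))
    (hB : B.det ≠ 0) (hWP : WeakPopov (B * Wmat F k ℓ)) :
    matDegNat (stepIMat ℓ s B R * Wmat F k (ℓ + 1)) =
        (stepIMat ℓ s B R * Wmat F k (ℓ + 1)).det.natDegree +
          s * (R.natDegree - k + 1) ∧
      s * (R.natDegree - k + 1) ≤ s * (n - k) :=
  statement11_general hk hkn hsℓ R hRn hRk B hB hWP
end

section
/- Let Q(X,Y) ∈ F_q[X][Y] be nonzero with Y-degree at most ℓ and suppose Q_ℓ(X), the Y^ℓ-coefficient, is a unit times a monic polynomial (nonzero). If Q vanishes with multiplicity at least s at each point (α_i, r_i') and f(X) ∈ F_q[X] satisfies deg f < k and f(α_i) = r_i' for at least n − τ indices i, where the (1,k−1)-weighted degree of Q is less than s(n−τ), then Q(X, f(X)) = 0 identically. -/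
/-!
If `f(αᵢ) = rᵢ'`, then the multiplicity condition at `(αᵢ, rᵢ')` makes `(X - αᵢ)^s` divide
`Q(X, f(X))`: after moving the point to the origin, the coefficient of `Yʲ` is divisible by
`X^(s-j)` while `f(X + αᵢ) - rᵢ'` is divisible by `X`. The `αᵢ` are distinct, so a nonzero
`Q(X, f(X))` would have degree at least `s(n - τ)`, yet its degree is at most the
`(1, k-1)`-weighted degree of `Q`.
-/

open Polynomial

open scoped Classical

/-- The (1, k−1)-weighted degree of a bivariate polynomial `Q : F[X][Y]`. -/
noncomputable def wdeg {F : Type*} [Field F] (k : ℕ) (Q : Polynomial (Polynomial F)) : ℕ :=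
  Q.support.sup fun j => (Q.coeff j).natDegree + (k - 1) * j

theorem Polynomial.X_pow_dvd_eval_of_coeff_coeff_eq_zero {R : Type*} [CommSemiring R]
    {P : R[X][X]} {g : R[X]} {s : ℕ} (hg : X ∣ g)
    (hP : ∀ i j : ℕ, i + j < s → (P.coeff j).coeff i = 0) :
    X ^ s ∣ P.eval g := by
  rw [eval_eq_sum_range]
  refine Finset.dvd_sum fun j _ => ?_
  have hcoeff : X ^ (s - j) ∣ P.coeff j :=
    X_pow_dvd_iff.mpr fun i hi => hP i j (by omega)
  calc X ^ s ∣ X ^ (s - j) * X ^ j := by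
        rw [← pow_add]; exact pow_dvd_pow X (by omega)
    _ ∣ P.coeff j * g ^ j := mul_dvd_mul hcoeff (pow_dvd_pow_of_dvd hg j)

section Multiplicity

variable {F : Type*} [Field F]

theorem eval_comp_X_add_C_eq_eval_shiftXY (Q : Polynomial (Polynomial F)) (a b : F)
    (f : Polynomial F) :
    (Q.eval f).comp (X + C a) = (shiftXY Q a b).eval (f.comp (X + C a) - C b) := by
  rw [shiftXY, eval_comp]
  simp only [eval_add, eval_X, eval_C, sub_add_cancel]
  rw [comp_eq_aeval, comp_eq_aeval]
  exact (eval_map_apply _ f).symm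

theorem HasMultAt.pow_dvd_eval {Q : Polynomial (Polynomial F)} {a b : F} {s : ℕ}
    (hm : HasMultAt Q a b s) {f : Polynomial F} (hfa : f.eval a = b) :
    (X - C a) ^ s ∣ Q.eval f := by
  have hroot : X ∣ f.comp (X + C a) - C b := by
    simp [X_dvd_iff, coeff_zero_eq_eval_zero, hfa]
  have hshifted : X ^ s ∣ (Q.eval f).comp (X + C a) := by
    rw [eval_comp_X_add_C_eq_eval_shiftXY Q a b]
    exact X_pow_dvd_eval_of_coeff_coeff_eq_zero hroot hm
  have hunshift := map_dvd (compRingHom (X - C a)) hshifted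
  rwa [coe_compRingHom_apply, coe_compRingHom_apply, comp_assoc, X_pow_comp, add_comp, X_comp,
    C_comp, sub_add_cancel, comp_X] at hunshift

end Multiplicity

theorem Polynomial.mul_card_le_natDegree_of_pow_dvd {F ι : Type*} [Field F] {α : ι → F}
    (hα : Function.Injective α) {p : F[X]} (hp : p ≠ 0) {s : ℕ} {S : Finset ι}
    (hdvd : ∀ i ∈ S, (X - C (α i)) ^ s ∣ p) :
    s * S.card ≤ p.natDegree := by
  have hprod : ∏ i ∈ S, (X - C (α i)) ^ s ∣ p :=
    Finset.prod_dvd_of_coprime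
      (fun i _ j _ hij => ((pairwise_coprime_X_sub_C hα) hij).pow) hdvd
  calc s * S.card = (∏ i ∈ S, (X - C (α i)) ^ s).natDegree := by
        rw [natDegree_prod _ _ fun i _ => pow_ne_zero _ (X_sub_C_ne_zero _)]
        simp [mul_comm]
    _ ≤ p.natDegree := natDegree_le_of_dvd hprod hp

theorem natDegree_eval_le_wdeg {F : Type*} [Field F] {k : ℕ} (Q : Polynomial (Polynomial F))
    {f : Polynomial F} (hf : f.natDegree ≤ k - 1) :
    (Q.eval f).natDegree ≤ wdeg k Q := by
  rw [eval_eq_sum, Polynomial.sum]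
  refine natDegree_sum_le_of_forall_le _ _ fun j hj => ?_
  calc (Q.coeff j * f ^ j).natDegree
      ≤ (Q.coeff j).natDegree + j * f.natDegree :=
        natDegree_mul_le.trans (Nat.add_le_add_left natDegree_pow_le _)
    _ ≤ (Q.coeff j).natDegree + (k - 1) * j := by
        rw [mul_comm (k - 1)]; gcongr
    _ ≤ wdeg k Q := Finset.le_sup (f := fun j => (Q.coeff j).natDegree + (k - 1) * j) hj

theorem statement19_general {F : Type*} [Field F] {n k s τ : ℕ}
    (α : Fin n → F) (hα : Function.Injective α) (r' : Fin n → F)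
    (Q : Polynomial (Polynomial F))
    (hmult : ∀ i, HasMultAt Q (α i) (r' i) s)
    (f : Polynomial F) (hf : f.natDegree < k)
    (hagree : n - τ ≤ (Finset.univ.filter fun i => f.eval (α i) = r' i).card)
    (hwdeg : wdeg k Q < s * (n - τ)) :
    Q.eval f = 0 := by
  by_contra hP
  have hlower := mul_card_le_natDegree_of_pow_dvd hα hP
    (S := Finset.univ.filter fun i => f.eval (α i) = r' i) fun i hi =>
      (hmult i).pow_dvd_eval (Finset.mem_filter.mp hi).2
  have hupper := natDegree_eval_le_wdeg Q (k := k) (by omega : f.natDegree ≤ k - 1)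
  have := Nat.mul_le_mul_left s hagree
  omega

/-- Let Q ≠ 0 have Y-degree ≤ ℓ with nonzero Y^ℓ-coefficient. If Q
vanishes with multiplicity ≥ s at each (α_i, r_i'), f has deg f < k and f(α_i) = r_i'
for at least n − τ indices, and the (1,k−1)-weighted degree of Q is < s(n−τ), then
Q(X, f(X)) = 0 identically. -/
theorem statement19 {F : Type*} [Field F] [Fintype F] {n k s ℓ τ : ℕ}
    (hk : 1 ≤ k) (hs : 1 ≤ s) (hℓ : 1 ≤ ℓ) (hτ : τ < n)
    (α : Fin n → F) (hα : Function.Injective α) (r' : Fin n → F)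
    (Q : Polynomial (Polynomial F)) (hQ0 : Q ≠ 0) (hQℓ : Q.natDegree ≤ ℓ)
    (hQlead : Q.coeff ℓ ≠ 0)
    (hmult : ∀ i, HasMultAt Q (α i) (r' i) s)
    (f : Polynomial F) (hf : f.natDegree < k)
    (hagree : n - τ ≤ (Finset.univ.filter fun i => f.eval (α i) = r' i).card)
    (hwdeg : wdeg k Q < s * (n - τ)) :
    Q.eval f = 0 :=
  statement19_general α hα r' Q hmult f hf hagree hwdeg
end
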